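/- For each d ≥ 1 there exist constants C > 0 and ε₀ > 0, depending only on d, such that: for all 0 < ε < ε₀ with ε η < 1/(100d) where η = |log ε|, and for every d×d real matrix A = I + εX with |X_{ik}| ≤ η for all i,k, for each 1 ≤ j ≤ d there exist real numbers γ_1, …, γ_{j−1} with |γ_n| ≤ C ε²η² for all n < j such that c_j'(A) = c_j^⊥(A) + Σ_{n<j} γ_n c_n(A). -/

import Mathlib

open MeasureTheory ProbabilityTheory Filter RealInnerProductSpace

instance matrixMeasurableSpace {d : ℕ} : MeasurableSpace (Matrix (Fin d) (Fin d) ℝ) :=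
  inferInstanceAs (MeasurableSpace (Fin d → Fin d → ℝ))

/-- The law of a `d × d` standard Gaussian matrix: all `d²` entries are
independent standard normal random variables. -/
noncomputable def stdGaussianMatrix (d : ℕ) : Measure (Matrix (Fin d) (Fin d) ℝ) :=
  (Measure.pi fun _ : Fin d × Fin d => gaussianReal 0 1).map
    fun f => Matrix.of fun i j => f (i, j)

/-- The `j`-th column (0-based) of a `d × d` matrix, as a vector of
`EuclideanSpace ℝ (Fin d)`; junk value `0` for `j ≥ d`. -/
noncomputable def col {d : ℕ} (A : Matrix (Fin d) (Fin d) ℝ) (j : ℕ) :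
    EuclideanSpace ℝ (Fin d) :=
  if h : j < d then (WithLp.equiv 2 (Fin d → ℝ)).symm (fun i => A i ⟨j, h⟩) else 0

/-- `cCol A k` is the `k`-th column of `A`, 1-based. -/
noncomputable def cCol {d : ℕ} (A : Matrix (Fin d) (Fin d) ℝ) (k : ℕ) :
    EuclideanSpace ℝ (Fin d) := col A (k - 1)

/-- `cPerp A k` is the `k`-th vector (1-based) of the non-normalized Gram–Schmidt
orthogonalization of the columns of `A`. -/
noncomputable def cPerp {d : ℕ} (A : Matrix (Fin d) (Fin d) ℝ) (k : ℕ) :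
    EuclideanSpace ℝ (Fin d) :=
  InnerProductSpace.gramSchmidt ℝ (col A) (k - 1)

/-- `cApprox A k = c_k'(A) = c_k(A) - ∑_{j<k} ⟨c_j(A), c_k(A)⟩ c_j(A)` (1-based `k`). -/
noncomputable def cApprox {d : ℕ} (A : Matrix (Fin d) (Fin d) ℝ) (k : ℕ) :
    EuclideanSpace ℝ (Fin d) :=
  col A (k - 1) - ∑ j ∈ Finset.range (k - 1), (inner ℝ (col A j) (col A (k - 1)) : ℝ) • col A j

/-- `sval A k` is the `k`-th largest singular value of `A` (1-based), i.e. the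
`k`-th largest square root of an eigenvalue of `AᴴA = AᵀA`. -/
noncomputable def sval {d : ℕ} (A : Matrix (Fin d) (Fin d) ℝ) (k : ℕ) : ℝ :=
  ((Finset.univ.val.map fun i =>
      Real.sqrt ((Matrix.isHermitian_iff_isSymm.mpr (Matrix.isSymm_transpose_mul_self A)).eigenvalues i)).sort (· ≤ ·)).getD
    (d - k) 0

/-- `matProd A n = A_n * A_{n-1} * ⋯ * A_1`. -/
noncomputable def matProd {d : ℕ} (A : ℕ → Matrix (Fin d) (Fin d) ℝ) :
    ℕ → Matrix (Fin d) (Fin d) ℝ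
  | 0 => 1
  | n + 1 => A (n + 1) * matProd A n

/-- `negLog x = log⁻ x = max (0, -log x)`. -/
noncomputable def negLog (x : ℝ) : ℝ := max 0 (-Real.log x)

/-- `theta B j` is the distance from the `j`-th column (1-based) of `B` to the span of
the other columns. -/
noncomputable def theta {d : ℕ} (B : Matrix (Fin d) (Fin d) ℝ) (j : ℕ) : ℝ :=
  Metric.infDist (cCol B j)
    (Submodule.span ℝ {v | ∃ i, 1 ≤ i ∧ i ≤ d ∧ i ≠ j ∧ v = cCol B i} :
      Set (EuclideanSpace ℝ (Fin d)))

/-- `Theta B = min_{1 ≤ j ≤ d} theta B j`. -/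
noncomputable def Theta {d : ℕ} (B : Matrix (Fin d) (Fin d) ℝ) : ℝ :=
  ⨅ j : Fin d, theta B ((j : ℕ) + 1)


theorem col_apply {d : ℕ} (A : Matrix (Fin d) (Fin d) ℝ) {j : ℕ} (h : j < d) (i : Fin d) :
    col A j i = A i ⟨j, h⟩ := by
  simp only [col, dif_pos h]; rfl

theorem inner_col {d : ℕ} (A : Matrix (Fin d) (Fin d) ℝ) {m n : ℕ} (hm : m < d) (hn : n < d) :
    (inner ℝ (col A m) (col A n) : ℝ) = ∑ i, A i ⟨m, hm⟩ * A i ⟨n, hn⟩ := by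
  rw [PiLp.inner_apply]
  simp only [RCLike.inner_apply, conj_trivial, col_apply A hm, col_apply A hn, mul_comm]

theorem inner_expand {d : ℕ} {ε η : ℝ} (hε : 0 ≤ ε) (hη : 0 ≤ η)
    (X : Matrix (Fin d) (Fin d) ℝ) (hX : ∀ i k, |X i k| ≤ η) {m n : ℕ} (hm : m < d) (hn : n < d) :
    |(inner ℝ (col (1 + ε • X) m) (col (1 + ε • X) n) : ℝ) - (if m = n then 1 else 0)| ≤
      2 * (ε * η) + d * (ε * η) ^ 2 := by
  rw [inner_col _ hm hn]
  have hA : ∀ i l, (1 + ε • X) i l = (if i = l then (1:ℝ) else 0) + ε * X i l := by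
    intro i l
    simp [Matrix.add_apply, Matrix.one_apply, Matrix.smul_apply]
  simp only [hA]
  have expand : ∑ i, ((if i = ⟨m,hm⟩ then (1:ℝ) else 0) + ε * X i ⟨m,hm⟩) *
      ((if i = ⟨n,hn⟩ then (1:ℝ) else 0) + ε * X i ⟨n,hn⟩)
      = (if m = n then 1 else 0) +
        (ε * X ⟨n,hn⟩ ⟨m,hm⟩ + ε * X ⟨m,hm⟩ ⟨n,hn⟩ + ε^2 * ∑ i, X i ⟨m,hm⟩ * X i ⟨n,hn⟩) := by
    have h4 : ∀ i : Fin d, (ε * X i ⟨m,hm⟩) * (ε * X i ⟨n,hn⟩) = ε^2 * (X i ⟨m,hm⟩ * X i ⟨n,hn⟩) := by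
      intro i; ring
    simp only [add_mul, mul_add, Finset.sum_add_distrib, ite_mul, mul_ite, one_mul, mul_one,
      zero_mul, mul_zero, Finset.sum_ite_eq, Finset.sum_ite_eq', Finset.mem_univ, if_true,
      Fin.mk.injEq, h4, ← Finset.mul_sum]
    have hcomm : (if n = m then (1:ℝ) else 0) = (if m = n then 1 else 0) := by simp [eq_comm]
    rw [hcomm]
    ring
  rw [expand, add_sub_cancel_left]
  have hSum : |∑ i, X i ⟨m,hm⟩ * X i ⟨n,hn⟩| ≤ d * η ^ 2 := by
    calc |∑ i, X i ⟨m,hm⟩ * X i ⟨n,hn⟩| ≤ ∑ i, |X i ⟨m,hm⟩ * X i ⟨n,hn⟩| :=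
          Finset.abs_sum_le_sum_abs _ _
      _ ≤ ∑ _i : Fin d, η ^ 2 := by
          apply Finset.sum_le_sum
          intro i _
          rw [abs_mul, sq]
          exact mul_le_mul (hX _ _) (hX _ _) (abs_nonneg _) hη
      _ = d * η ^ 2 := by simp [mul_comm]
  have h1 : |ε * X ⟨n,hn⟩ ⟨m,hm⟩| ≤ ε * η := by
    rw [abs_mul, abs_of_nonneg hε]; exact mul_le_mul_of_nonneg_left (hX _ _) hε
  have h2 : |ε * X ⟨m,hm⟩ ⟨n,hn⟩| ≤ ε * η := by
    rw [abs_mul, abs_of_nonneg hε]; exact mul_le_mul_of_nonneg_left (hX _ _) hε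
  have h3 : |ε^2 * ∑ i, X i ⟨m,hm⟩ * X i ⟨n,hn⟩| ≤ d * (ε * η)^2 := by
    rw [abs_mul, abs_of_nonneg (sq_nonneg ε)]
    calc ε^2 * |∑ i, X i ⟨m,hm⟩ * X i ⟨n,hn⟩| ≤ ε^2 * (d * η^2) :=
          mul_le_mul_of_nonneg_left hSum (sq_nonneg ε)
      _ = d * (ε * η)^2 := by ring
  calc |ε * X ⟨n,hn⟩ ⟨m,hm⟩ + ε * X ⟨m,hm⟩ ⟨n,hn⟩ + ε^2 * ∑ i, X i ⟨m,hm⟩ * X i ⟨n,hn⟩|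
      ≤ |ε * X ⟨n,hn⟩ ⟨m,hm⟩ + ε * X ⟨m,hm⟩ ⟨n,hn⟩| + |ε^2 * ∑ i, X i ⟨m,hm⟩ * X i ⟨n,hn⟩| :=
        abs_add_le _ _
    _ ≤ (|ε * X ⟨n,hn⟩ ⟨m,hm⟩| + |ε * X ⟨m,hm⟩ ⟨n,hn⟩|) + |ε^2 * ∑ i, X i ⟨m,hm⟩ * X i ⟨n,hn⟩| := by
        gcongr; exact abs_add_le _ _
    _ ≤ (ε * η + ε * η) + d * (ε * η)^2 := by gcongr
    _ = 2 * (ε * η) + d * (ε * η) ^ 2 := by ring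

section aux
variable {E : Type*} [NormedAddCommGroup E] [InnerProductSpace ℝ E]

theorem sub_gramSchmidt_mem_span (f : ℕ → E) (n : ℕ) :
    f n - InnerProductSpace.gramSchmidt ℝ f n ∈ Submodule.span ℝ (f '' Set.Iio n) := by
  have h := InnerProductSpace.gramSchmidt_def ℝ f n
  have heq : f n - InnerProductSpace.gramSchmidt ℝ f n =
      ∑ i ∈ Finset.Iio n, (ℝ ∙ InnerProductSpace.gramSchmidt ℝ f i).starProjection (f n) := by
    rw [h]; abel
  rw [heq]
  refine Submodule.sum_mem _ fun i hi => ?_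
  have hin : i < n := Finset.mem_Iio.mp hi
  have h1 : InnerProductSpace.gramSchmidt ℝ f i ∈ Submodule.span ℝ (f '' Set.Iio n) := by
    refine Submodule.span_mono (Set.image_mono (f := f) ?_) (InnerProductSpace.gramSchmidt_mem_span ℝ f le_rfl)
    exact fun x hx => lt_of_le_of_lt hx hin
  have h2 : (ℝ ∙ InnerProductSpace.gramSchmidt ℝ f i) ≤ Submodule.span ℝ (f '' Set.Iio n) :=
    (Submodule.span_singleton_le_iff_mem _ _).mpr h1
  exact h2 (by rw [Submodule.starProjection_apply]; exact SetLike.coe_mem _)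

theorem inner_col_gramSchmidt_zero (f : ℕ → E) {m n : ℕ} (h : m < n) :
    (inner ℝ (f m) (InnerProductSpace.gramSchmidt ℝ f n) : ℝ) = 0 := by
  rw [real_inner_comm]
  exact InnerProductSpace.gramSchmidt_inv_triangular ℝ f h

omit [NormedAddCommGroup E] [InnerProductSpace ℝ E] in
theorem range_fin_eq_image (f : ℕ → E) (k : ℕ) :
    Set.range (fun i : Fin k => f i) = f '' Set.Iio k := by
  ext x
  constructor
  · rintro ⟨i, rfl⟩; exact ⟨i, i.2, rfl⟩
  · rintro ⟨n, hn, rfl⟩; exact ⟨⟨n, hn⟩, rfl⟩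
end aux


set_option maxHeartbeats 2000000 in
theorem stmt18 {d : ℕ} (hd : 1 ≤ d) :
    ∃ C > 0, ∃ ε₀ > 0, ∀ ε : ℝ, 0 < ε → ε < ε₀ → ε * |Real.log ε| < 1 / (100 * d) →
      ∀ X : Matrix (Fin d) (Fin d) ℝ, (∀ i k, |X i k| ≤ |Real.log ε|) →
        ∀ j, 1 ≤ j → j ≤ d →
          ∃ γ : ℕ → ℝ, (∀ n, 1 ≤ n → n < j → |γ n| ≤ C * ε ^ 2 * |Real.log ε| ^ 2) ∧
            cApprox (1 + ε • X) j =
              cPerp (1 + ε • X) j + ∑ n ∈ Finset.Ico 1 j, γ n • cCol (1 + ε • X) n := by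
  have hd0 : (0:ℝ) < d := by exact_mod_cast hd
  refine ⟨10 * d, by positivity, 1, one_pos, ?_⟩
  intro ε hε hε1 hεη X hX j hj1 hjd
  set η : ℝ := |Real.log ε| with hηdef
  have hη : 0 ≤ η := abs_nonneg _
  set A : Matrix (Fin d) (Fin d) ℝ := 1 + ε • X with hAdef
  set f : ℕ → EuclideanSpace ℝ (Fin d) := col A with hfdef
  set k := j - 1 with hkdef
  have hkd : k < d := by omega
  have hεη0 : 0 ≤ ε * η := mul_nonneg hε.le hη
  have hsmall : (d:ℝ) * (ε * η) < 1 / 100 := by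
    have h1 := mul_lt_mul_of_pos_left hεη hd0
    have h2 : (d:ℝ) * (1 / (100 * d)) = 1 / 100 := by field_simp
    linarith
  -- entry-wise Gram error bound
  have hE : ∀ m n : ℕ, m < d → n < d →
      |(inner ℝ (f m) (f n) : ℝ) - (if m = n then 1 else 0)| ≤ 3 * (ε * η) := by
    intro m n hm hn
    have := inner_expand hε.le hη X hX hm hn
    have hq : (d:ℝ) * (ε * η) ^ 2 ≤ (1/100) * (ε * η) := by
      have : (d:ℝ) * (ε * η) ^ 2 = ((d:ℝ) * (ε * η)) * (ε * η) := by ring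
      rw [this]
      exact mul_le_mul_of_nonneg_right (by linarith) hεη0
    calc |(inner ℝ (f m) (f n) : ℝ) - (if m = n then 1 else 0)|
        ≤ 2 * (ε * η) + d * (ε * η) ^ 2 := this
      _ ≤ 2 * (ε * η) + (1/100) * (ε * η) := by linarith
      _ ≤ 3 * (ε * η) := by linarith
  -- |G n k| for n < k
  have hGnk : ∀ n : ℕ, n < k → |(inner ℝ (f n) (f k) : ℝ)| ≤ 3 * (ε * η) := by
    intro n hn
    have := hE n k (hn.trans hkd) hkd
    rwa [if_neg hn.ne, sub_zero] at this
  set w : EuclideanSpace ℝ (Fin d) := cApprox A j - cPerp A j with hwdef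
  have hcA : cApprox A j = f k - ∑ n ∈ Finset.range k, (inner ℝ (f n) (f k) : ℝ) • f n := rfl
  have hcP : cPerp A j = InnerProductSpace.gramSchmidt ℝ f k := rfl
  -- w in span of previous columns
  have hw_mem : w ∈ Submodule.span ℝ (Set.range fun i : Fin k => f i) := by
    rw [range_fin_eq_image]
    have h1 : w = (f k - InnerProductSpace.gramSchmidt ℝ f k)
        - ∑ n ∈ Finset.range k, (inner ℝ (f n) (f k) : ℝ) • f n := by
      rw [hwdef, hcA, hcP]; abel
    rw [h1]
    refine Submodule.sub_mem _ (sub_gramSchmidt_mem_span f k)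
      (Submodule.sum_mem _ fun n hn => Submodule.smul_mem _ _ (Submodule.subset_span
        ⟨n, Finset.mem_range.mp hn, rfl⟩))
  obtain ⟨δ', hδ'⟩ := (Submodule.mem_span_range_iff_exists_fun ℝ).mp hw_mem
  set δ : ℕ → ℝ := fun n => if h : n < k then δ' ⟨n, h⟩ else 0 with hδdef
  have hwsum : ∑ n ∈ Finset.range k, δ n • f n = w := by
    rw [Finset.sum_range fun n => δ n • f n]
    rw [← hδ']
    apply Finset.sum_congr rfl
    intro i _
    simp [hδdef, i.isLt]
  -- inner products of f m with w, for m < k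
  have ht : ∀ m : ℕ, m < k → |(inner ℝ (f m) w : ℝ)| ≤ 9 * d * (ε * η) ^ 2 := by
    intro m hm
    have hmd : m < d := hm.trans hkd
    have hzero : (inner ℝ (f m) (cPerp A j) : ℝ) = 0 := by
      rw [hcP]; exact inner_col_gramSchmidt_zero f hm
    have hval : (inner ℝ (f m) w : ℝ) =
        -∑ n ∈ Finset.range k, (inner ℝ (f n) (f k) : ℝ) *
          ((inner ℝ (f m) (f n) : ℝ) - (if m = n then 1 else 0)) := by
      rw [hwdef, inner_sub_right, hzero, sub_zero, hcA, inner_sub_right, inner_sum]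
      simp only [real_inner_smul_right]
      have hpick : ∑ n ∈ Finset.range k, (inner ℝ (f n) (f k) : ℝ) * (if m = n then 1 else 0)
          = (inner ℝ (f m) (f k) : ℝ) := by
        simp [mul_ite, Finset.sum_ite_eq, hm]
      calc (inner ℝ (f m) (f k) : ℝ) - ∑ n ∈ Finset.range k,
            (inner ℝ (f n) (f k) : ℝ) * (inner ℝ (f m) (f n) : ℝ)
          = -(∑ n ∈ Finset.range k, (inner ℝ (f n) (f k) : ℝ) * (inner ℝ (f m) (f n) : ℝ)
              - ∑ n ∈ Finset.range k, (inner ℝ (f n) (f k) : ℝ) * (if m = n then 1 else 0)) := by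
            rw [hpick]; ring
        _ = -∑ n ∈ Finset.range k, (inner ℝ (f n) (f k) : ℝ) *
              ((inner ℝ (f m) (f n) : ℝ) - (if m = n then 1 else 0)) := by
            rw [← Finset.sum_sub_distrib]
            congr 1
            apply Finset.sum_congr rfl
            intro n _
            ring
    rw [hval, abs_neg]
    calc |∑ n ∈ Finset.range k, (inner ℝ (f n) (f k) : ℝ) *
          ((inner ℝ (f m) (f n) : ℝ) - (if m = n then 1 else 0))|
        ≤ ∑ n ∈ Finset.range k, |(inner ℝ (f n) (f k) : ℝ) *
          ((inner ℝ (f m) (f n) : ℝ) - (if m = n then 1 else 0))| := Finset.abs_sum_le_sum_abs _ _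
      _ ≤ ∑ _n ∈ Finset.range k, (3 * (ε * η)) * (3 * (ε * η)) := by
          apply Finset.sum_le_sum
          intro n hn
          have hnk := Finset.mem_range.mp hn
          rw [abs_mul]
          exact mul_le_mul (hGnk n hnk) (hE m n hmd (hnk.trans hkd)) (abs_nonneg _)
            (by positivity)
      _ = k * ((3 * (ε * η)) * (3 * (ε * η))) := by
          rw [Finset.sum_const, Finset.card_range]; simp [mul_comm]
      _ ≤ d * ((3 * (ε * η)) * (3 * (ε * η))) := by
          have : (k:ℝ) ≤ d := by exact_mod_cast hkd.le
          nlinarith [mul_nonneg hεη0 hεη0]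
      _ = 9 * d * (ε * η) ^ 2 := by ring
  -- the Gram system satisfied by δ
  have hsys : ∀ m : ℕ, m < k → (inner ℝ (f m) w : ℝ) =
      δ m + ∑ n ∈ Finset.range k, δ n *
        ((inner ℝ (f m) (f n) : ℝ) - (if m = n then 1 else 0)) := by
    intro m hm
    rw [← hwsum, inner_sum]
    simp only [real_inner_smul_right]
    have hpick : ∑ n ∈ Finset.range k, δ n * (if m = n then 1 else 0) = δ m := by
      simp [mul_ite, Finset.sum_ite_eq, hm]
    calc ∑ n ∈ Finset.range k, δ n * (inner ℝ (f m) (f n) : ℝ)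
        = ∑ n ∈ Finset.range k, (δ n * (if m = n then 1 else 0)
            + δ n * ((inner ℝ (f m) (f n) : ℝ) - (if m = n then 1 else 0))) := by
          apply Finset.sum_congr rfl; intro n _; ring
      _ = δ m + ∑ n ∈ Finset.range k, δ n *
            ((inner ℝ (f m) (f n) : ℝ) - (if m = n then 1 else 0)) := by
          rw [Finset.sum_add_distrib, hpick]
  -- bound on δ
  have hδ_bound : ∀ m : ℕ, m < k → |δ m| ≤ 10 * d * (ε * η) ^ 2 := by
    intro m hm
    rcases Finset.exists_max_image (Finset.range k) (fun n => |δ n|) ⟨m, Finset.mem_range.mpr hm⟩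
      with ⟨m0, hm0mem, hmax⟩
    have hm0 : m0 < k := Finset.mem_range.mp hm0mem
    have hM : |δ m0| ≤ 9 * d * (ε * η) ^ 2 + (3/100) * |δ m0| := by
      have heq := hsys m0 hm0
      have hrepr : δ m0 = (inner ℝ (f m0) w : ℝ) - ∑ n ∈ Finset.range k, δ n *
          ((inner ℝ (f m0) (f n) : ℝ) - (if m0 = n then 1 else 0)) := by linarith [heq]
      have hsumb : |∑ n ∈ Finset.range k, δ n *
          ((inner ℝ (f m0) (f n) : ℝ) - (if m0 = n then 1 else 0))| ≤ (3/100) * |δ m0| := by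
        calc |∑ n ∈ Finset.range k, δ n *
              ((inner ℝ (f m0) (f n) : ℝ) - (if m0 = n then 1 else 0))|
            ≤ ∑ n ∈ Finset.range k, |δ n *
              ((inner ℝ (f m0) (f n) : ℝ) - (if m0 = n then 1 else 0))| :=
              Finset.abs_sum_le_sum_abs _ _
          _ ≤ ∑ _n ∈ Finset.range k, |δ m0| * (3 * (ε * η)) := by
              apply Finset.sum_le_sum
              intro n hn
              have hnk := Finset.mem_range.mp hn
              rw [abs_mul]
              exact mul_le_mul (hmax n hn) (hE m0 n (hm0.trans hkd) (hnk.trans hkd))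
                (abs_nonneg _) (abs_nonneg _)
          _ = k * (|δ m0| * (3 * (ε * η))) := by
              rw [Finset.sum_const, Finset.card_range]; simp [mul_comm]
          _ ≤ (3/100) * |δ m0| := by
              have hkd' : (k:ℝ) ≤ d := by exact_mod_cast hkd.le
              have h3 : (k:ℝ) * (ε * η) ≤ 1/100 := by
                calc (k:ℝ) * (ε * η) ≤ d * (ε * η) :=
                      mul_le_mul_of_nonneg_right hkd' hεη0
                  _ ≤ 1/100 := hsmall.le
              nlinarith [abs_nonneg (δ m0), Nat.cast_nonneg (α := ℝ) k]
      have htri : |(inner ℝ (f m0) w : ℝ) - ∑ n ∈ Finset.range k, δ n *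
            ((inner ℝ (f m0) (f n) : ℝ) - (if m0 = n then 1 else 0))|
          ≤ |(inner ℝ (f m0) w : ℝ)| + |∑ n ∈ Finset.range k, δ n *
            ((inner ℝ (f m0) (f n) : ℝ) - (if m0 = n then 1 else 0))| := abs_sub _ _
      have habs : |δ m0| = |(inner ℝ (f m0) w : ℝ) - ∑ n ∈ Finset.range k, δ n *
            ((inner ℝ (f m0) (f n) : ℝ) - (if m0 = n then 1 else 0))| := by rw [hrepr]
      have h9 := ht m0 hm0
      linarith
    have hds : 0 ≤ (d:ℝ) * (ε * η) ^ 2 := by positivity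
    have hM2 : |δ m0| ≤ 10 * d * (ε * η) ^ 2 := by linarith
    exact le_trans (hmax m (Finset.mem_range.mpr hm)) hM2
  refine ⟨fun n => δ (n - 1), ?_, ?_⟩
  · intro n hn1 hnj
    have : n - 1 < k := by omega
    calc |δ (n - 1)| ≤ 10 * d * (ε * η) ^ 2 := hδ_bound _ this
      _ = 10 * d * ε ^ 2 * η ^ 2 := by ring
  · have hcCol : ∀ n : ℕ, cCol A n = f (n - 1) := fun n => rfl
    have hIco : ∑ n ∈ Finset.Ico 1 j, δ (n - 1) • cCol A n
        = ∑ n ∈ Finset.range k, δ n • f n := by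
      simp only [hcCol]
      rw [Finset.sum_Ico_eq_sum_range]
      simp only [Nat.add_sub_cancel_left]
      rfl
    rw [hIco, hwsum, hwdef]
    abel
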